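/- arXiv:2007.06239 — 5 statements merged into one kernel-verified Lean document; each statement's English description precedes it below -/
import Mathlib

section
/- Fix an integer n ≥ 1, a real number r > 0, and a real number m with m ∉ {0, 2, 4, …, 2n}. Then there exists δ > 0 such that for every θ = (θ_1,…,θ_n) ∈ ℝ^n, Σ_{i=1}^n sin²θ_i + r²·( Σ_{i=1}^n (cos θ_i − 1) + m )² ≥ δ. -/
/-- uniform positivity of the square of the Wilson–Dirac symbol: for `n ≥ 1`,
`r > 0` and `m ∉ {0, 2, 4, …, 2n}`, there is `δ > 0` with
`Σᵢ sin²θᵢ + r²·(Σᵢ(cos θᵢ − 1) + m)² ≥ δ` for all `θ ∈ ℝⁿ`. -/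
theorem wilson_dirac_symbol_uniformly_invertible
    (n : ℕ) (hn : 1 ≤ n) (r m : ℝ) (hr : 0 < r)
    (hm : ∀ l : ℕ, l ≤ n → m ≠ 2 * l) :
    ∃ δ : ℝ, 0 < δ ∧ ∀ θ : Fin n → ℝ,
      δ ≤ (∑ i, Real.sin (θ i) ^ 2)
          + r ^ 2 * ((∑ i, (Real.cos (θ i) - 1)) + m) ^ 2 := by
  obtain ⟨d, hd0, hd⟩ : ∃ d : ℝ, 0 < d ∧ ∀ l : ℕ, l ≤ n → d ≤ |m - 2 * l| := by
    have hne : (Finset.range (n+1)).Nonempty := ⟨0, by simp⟩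
    refine ⟨(Finset.range (n+1)).inf' hne (fun l => |m - 2 * l|), ?_, ?_⟩
    · rw [Finset.lt_inf'_iff]
      intro l hl
      have hl' : l ≤ n := by
        have := Finset.mem_range.mp hl; omega
      exact abs_pos.mpr (sub_ne_zero.mpr (hm l hl'))
    · intro l hl
      exact Finset.inf'_le _ (Finset.mem_range.mpr (by omega))
  refine ⟨min (d/2) (r^2 * (d/2)^2), lt_min (by positivity) (by positivity), ?_⟩
  intro θ
  set x : Fin n → ℝ := fun i => 1 - Real.cos (θ i) with hxdef
  have hx0 : ∀ i, 0 ≤ x i := fun i => by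
    have := Real.cos_le_one (θ i); simp only [hxdef]; linarith
  have hx2 : ∀ i, x i ≤ 2 := fun i => by
    have := Real.neg_one_le_cos (θ i); simp only [hxdef]; linarith
  have hsin : ∀ i, Real.sin (θ i) ^ 2 = x i * (2 - x i) := fun i => by
    have := Real.sin_sq_add_cos_sq (θ i)
    simp only [hxdef]; nlinarith [this]
  have hmin : ∀ i, min (x i) (2 - x i) ≤ Real.sin (θ i) ^ 2 := fun i => by
    rw [hsin i]
    rcases min_cases (x i) (2 - x i) with ⟨h, h'⟩ | ⟨h, h'⟩ <;>
      nlinarith [hx0 i, hx2 i]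
  set s := ∑ i, x i with hsdef
  have hcs : (∑ i, (Real.cos (θ i) - 1)) = -s := by
    rw [hsdef, ← Finset.sum_neg_distrib]
    exact Finset.sum_congr rfl fun i _ => by simp [hxdef]
  set T := Finset.univ.filter (fun i : Fin n => 1 < x i) with hT
  have hk : T.card ≤ n := le_trans (Finset.card_filter_le _ _) (by simp)
  have hsum2 : (∑ i, (if 1 < x i then (2:ℝ) else 0)) = 2 * T.card := by
    rw [← Finset.sum_filter, ← hT, Finset.sum_const, nsmul_eq_mul, mul_comm]
  have key : |s - 2 * T.card| ≤ ∑ i, min (x i) (2 - x i) := by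
    have heq : s - 2 * T.card = ∑ i, (x i - if 1 < x i then (2:ℝ) else 0) := by
      rw [Finset.sum_sub_distrib, hsum2]
    rw [heq]
    refine le_trans (Finset.abs_sum_le_sum_abs _ _) (Finset.sum_le_sum fun i _ => ?_)
    by_cases h : 1 < x i
    · simp only [h, if_true]
      rw [abs_of_nonpos (by linarith [hx2 i])]
      have : min (x i) (2 - x i) = 2 - x i := min_eq_right (by linarith)
      rw [this]; ring_nf; linarith
    · simp only [h, if_false]
      rw [sub_zero, abs_of_nonneg (hx0 i)]
      have : min (x i) (2 - x i) = x i := min_eq_left (by push_neg at h; linarith)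
      rw [this]
  have hsum_min : (∑ i, min (x i) (2 - x i)) ≤ ∑ i, Real.sin (θ i) ^ 2 :=
    Finset.sum_le_sum fun i _ => hmin i
  have hsin_nonneg : (0:ℝ) ≤ ∑ i, Real.sin (θ i) ^ 2 := by positivity
  rw [hcs]
  rcases le_or_gt (d/2) |m - s| with hc | hc
  · have h1 : (d/2)^2 ≤ (m - s)^2 := by
      rw [← sq_abs (m - s)]
      exact pow_le_pow_left₀ (by positivity) hc 2
    have h2 : r^2 * (d/2)^2 ≤ r^2 * (-s + m)^2 := by
      have : (-s + m)^2 = (m - s)^2 := by ring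
      rw [this]
      exact mul_le_mul_of_nonneg_left h1 (by positivity)
    calc min (d/2) (r^2 * (d/2)^2) ≤ r^2 * (d/2)^2 := min_le_right _ _
      _ ≤ (∑ i, Real.sin (θ i) ^ 2) + r^2 * (-s + m)^2 := by linarith
  · have h1 : d ≤ |m - 2 * T.card| := hd T.card hk
    have h2 : |m - 2 * T.card| ≤ |m - s| + |s - 2 * T.card| := by
      calc |m - 2 * T.card| = |(m - s) + (s - 2 * T.card)| := by ring_nf
        _ ≤ |m - s| + |s - 2 * T.card| := abs_add_le _ _
    have h3 : d/2 ≤ ∑ i, Real.sin (θ i) ^ 2 := by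
      have : d/2 ≤ |s - 2 * T.card| := by linarith
      linarith [le_trans this (le_trans key hsum_min)]
    have h4 : (0:ℝ) ≤ r^2 * (-s + m)^2 := by positivity
    calc min (d/2) (r^2 * (d/2)^2) ≤ d/2 := min_le_left _ _
      _ ≤ (∑ i, Real.sin (θ i) ^ 2) + r^2 * (-s + m)^2 := by linarith
end

section
/- Let A and ⋆ be as in the context. Then for every p₀ ∈ A with p₀² = p₀ and p₀* = p₀, there exists an element p_ℏ = Σ_{j≥0} p_j ℏ^j ∈ A[[ℏ]] such that p_ℏ ⋆ p_ℏ = p_ℏ, p_ℏ* = p_ℏ, and p_0 = p₀ (i.e. p_ℏ ≡ p₀ mod ℏ). -/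
/-- Formal power series `Σ_j a_j ℏ^j` over `A` are encoded by their coefficient sequences
`ℕ → A`.  A ℂ[[ℏ]]-bilinear star product is determined by its coefficient maps
`Cb : ℕ → A → A → A` via `(u ⋆ v)_k = Σ_{l+i+j=k} Cb l (u i) (v j)`. -/
def starCoeffMul {A : Type*} [Ring A] (Cb : ℕ → A → A → A) (u v : ℕ → A) : ℕ → A :=
  fun k => ∑ l ∈ Finset.range (k + 1), ∑ i ∈ Finset.range (k - l + 1),
    Cb l (u i) (v (k - l - i))

/-- The unit power series `1 ∈ A[[ℏ]]`. -/
def fpsOne {A : Type*} [Ring A] : ℕ → A := fun k => if k = 0 then 1 else 0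

/-- The involution on `A[[ℏ]]` induced by an involution `star'` of `A` and `ℏ* = −ℏ`:
`(Σ_j a_j ℏ^j)* = Σ_j (−1)^j a_j* ℏ^j`. -/
def fpsStar {A : Type*} [Ring A] [Algebra ℂ A] (star' : A → A) (u : ℕ → A) : ℕ → A :=
  fun j => ((-1 : ℂ) ^ j) • star' (u j)

/-- Type synonym for coefficient sequences, carrying the star-product ring structure. -/
def FPS (A : Type*) : Type _ := ℕ → A

lemma idem_key {R : Type*} [Ring R] (e : R) :
    (3•e^2 - 2•e^3) * (3•e^2 - 2•e^3) - (3•e^2 - 2•e^3)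
      = ((e*e - e)*(e*e - e)) * (4•(e*e-e) - 3•(1:R)) := by
  simp only [nsmul_eq_mul, Nat.cast_ofNat, mul_one]
  noncomm_ring

lemma diff_key {R : Type*} [Ring R] (e : R) :
    (3•e^2 - 2•e^3) - e = (e*e - e) * (1 - 2•e) := by
  simp only [nsmul_eq_mul, Nat.cast_ofNat]
  noncomm_ring

/-- lifting of self-adjoint idempotents to a formal star product
(existence part of Lemma 3.3(1)): if `p₀ ∈ A` satisfies `p₀² = p₀` and `p₀* = p₀`, then
there is `p_ℏ = Σ_j p_j ℏ^j ∈ A[[ℏ]]` with `p_ℏ ⋆ p_ℏ = p_ℏ`, `p_ℏ* = p_ℏ` and `p_0 = p₀`. -/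
theorem star_product_projection_lift
    {A : Type*} [Ring A] [Algebra ℂ A] (star' : A → A)
    (hstar_add : ∀ a b : A, star' (a + b) = star' a + star' b)
    (hstar_mul : ∀ a b : A, star' (a * b) = star' b * star' a)
    (hstar_one : star' 1 = 1)
    (hstar_invol : ∀ a : A, star' (star' a) = a)
    (hstar_smul : ∀ (z : ℂ) (a : A), star' (z • a) = (starRingEnd ℂ z) • star' a)
    (Cb : ℕ → A → A → A)
    (hC0 : ∀ a b : A, Cb 0 a b = a * b)
    (hCadd₁ : ∀ l (a a' b : A), Cb l (a + a') b = Cb l a b + Cb l a' b)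
    (hCadd₂ : ∀ l (a b b' : A), Cb l a (b + b') = Cb l a b + Cb l a b')
    (hCsmul₁ : ∀ l (z : ℂ) (a b : A), Cb l (z • a) b = z • Cb l a b)
    (hCsmul₂ : ∀ l (z : ℂ) (a b : A), Cb l a (z • b) = z • Cb l a b)
    (hassoc : ∀ u v w : ℕ → A,
      starCoeffMul Cb (starCoeffMul Cb u v) w = starCoeffMul Cb u (starCoeffMul Cb v w))
    (hone : ∀ u : ℕ → A, starCoeffMul Cb u fpsOne = u ∧ starCoeffMul Cb fpsOne u = u)
    (hstar_mul' : ∀ u v : ℕ → A,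
      fpsStar star' (starCoeffMul Cb u v)
        = starCoeffMul Cb (fpsStar star' v) (fpsStar star' u))
    (p₀ : A) (hp : p₀ * p₀ = p₀) (hps : star' p₀ = p₀) :
    ∃ p : ℕ → A, starCoeffMul Cb p p = p ∧ fpsStar star' p = p ∧ p 0 = p₀ := by
  classical
  -- Basic consequences
  have hC0l : ∀ l (b : A), Cb l 0 b = 0 := by
    intro l b
    have := hCsmul₁ l 0 0 b
    simpa using this
  have hC0r : ∀ l (a : A), Cb l a 0 = 0 := by
    intro l a
    have := hCsmul₂ l 0 a 0
    simpa using this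
  have hstar_zero : star' 0 = 0 := by
    have := hstar_smul 0 0
    simpa using this
  have hstar_neg : ∀ a : A, star' (-a) = - star' a := by
    intro a
    have := hstar_smul (-1) a
    simpa using this
  -- Ring structure on FPS A
  letI instAdd : AddCommGroup (FPS A) := inferInstanceAs (AddCommGroup (ℕ → A))
  letI instRing : Ring (FPS A) :=
  { instAdd with
    mul := starCoeffMul Cb
    one := fpsOne
    mul_assoc := hassoc
    one_mul := fun u => (hone u).2
    mul_one := fun u => (hone u).1
    left_distrib := by
      intro u v w
      funext k
      show starCoeffMul Cb u (v + w) k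
          = starCoeffMul Cb u v k + starCoeffMul Cb u w k
      unfold starCoeffMul
      rw [← Finset.sum_add_distrib]
      refine Finset.sum_congr rfl fun l _ => ?_
      rw [← Finset.sum_add_distrib]
      refine Finset.sum_congr rfl fun i _ => ?_
      exact hCadd₂ l _ _ _
    right_distrib := by
      intro u v w
      funext k
      show starCoeffMul Cb (u + v) w k
          = starCoeffMul Cb u w k + starCoeffMul Cb v w k
      unfold starCoeffMul
      rw [← Finset.sum_add_distrib]
      refine Finset.sum_congr rfl fun l _ => ?_
      rw [← Finset.sum_add_distrib]
      refine Finset.sum_congr rfl fun i _ => ?_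
      exact hCadd₁ l _ _ _
    zero_mul := by
      intro u
      funext k
      show starCoeffMul Cb 0 u k = 0
      unfold starCoeffMul
      refine Finset.sum_eq_zero fun l _ => Finset.sum_eq_zero fun i _ => ?_
      show Cb l 0 (u _) = 0
      exact hC0l _ _
    mul_zero := by
      intro u
      funext k
      show starCoeffMul Cb u 0 k = 0
      unfold starCoeffMul
      refine Finset.sum_eq_zero fun l _ => Finset.sum_eq_zero fun i _ => ?_
      show Cb l (u i) 0 = 0
      exact hC0r _ _ }
  have hmul_def : ∀ u v : FPS A, u * v = starCoeffMul Cb u v := fun _ _ => rfl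
  -- the star operation on FPS A
  set S : FPS A → FPS A := fpsStar star' with hS
  have hSadd : ∀ u v : FPS A, S (u + v) = S u + S v := by
    intro u v
    funext k
    show ((-1:ℂ)^k) • star' (u k + v k) = ((-1:ℂ)^k) • star' (u k) + ((-1:ℂ)^k) • star' (v k)
    rw [hstar_add, smul_add]
  have hSzero : S 0 = 0 := by
    funext k
    show ((-1:ℂ)^k) • star' 0 = 0
    rw [hstar_zero, smul_zero]
  have hSneg : ∀ u : FPS A, S (-u) = - S u := by
    intro u
    funext k
    show ((-1:ℂ)^k) • star' (-(u k)) = -(((-1:ℂ)^k) • star' (u k))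
    rw [hstar_neg, smul_neg]
  have hSsub : ∀ u v : FPS A, S (u - v) = S u - S v := by
    intro u v
    rw [sub_eq_add_neg, hSadd, hSneg, sub_eq_add_neg]
  have hSnsmul : ∀ (n : ℕ) (u : FPS A), S (n • u) = n • S u := by
    intro n u
    induction n with
    | zero => simpa using hSzero
    | succ n ih => rw [succ_nsmul, hSadd, ih, succ_nsmul]
  have hSmul : ∀ u v : FPS A, S (u * v) = S v * S u := by
    intro u v
    exact hstar_mul' u v
  have hSone : S 1 = 1 := by
    funext k
    show ((-1:ℂ)^k) • star' (fpsOne k) = fpsOne k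
    by_cases hk : k = 0 <;> simp [fpsOne, hk, hstar_one, hstar_zero]
  have hSpow : ∀ (u : FPS A), S u = u → ∀ m : ℕ, S (u ^ m) = u ^ m := by
    intro u hu m
    induction m with
    | zero => rw [pow_zero]; exact hSone
    | succ m ih =>
      rw [pow_succ, hSmul, hu, ih]
      exact (pow_succ' u m).symm.trans (pow_succ u m)
  -- order predicate
  set Ord : ℕ → FPS A → Prop := fun n u => ∀ k < n, u k = 0 with hOrdDef
  have hOmul : ∀ {n m : ℕ} {u v : FPS A}, Ord n u → Ord m v → Ord (n + m) (u * v) := by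
    intro n m u v hu hv k hk
    show starCoeffMul Cb u v k = 0
    unfold starCoeffMul
    refine Finset.sum_eq_zero fun l hl => Finset.sum_eq_zero fun i hi => ?_
    simp only [Finset.mem_range] at hl hi
    by_cases hin : i < n
    · rw [hu i hin, hC0l]
    · have : k - l - i < m := by omega
      rw [hv _ this, hC0r]
  have hOsub : ∀ {n : ℕ} {u v : FPS A}, Ord n u → Ord n v → Ord n (u - v) := by
    intro n u v hu hv k hk
    show u k - v k = 0
    rw [hu k hk, hv k hk, sub_zero]
  have hOmono : ∀ {n m : ℕ} {u : FPS A}, m ≤ n → Ord n u → Ord m u := by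
    intro n m u hmn hu k hk
    exact hu k (lt_of_lt_of_le hk hmn)
  -- the recursive sequence
  set e0 : FPS A := (fun k => if k = 0 then p₀ else 0) with he0
  set E : ℕ → FPS A := fun n => Nat.rec e0 (fun _ x => 3•x^2 - 2•x^3) n with hE
  have hE0 : E 0 = e0 := rfl
  have hES : ∀ n, E (n + 1) = 3•(E n)^2 - 2•(E n)^3 := fun n => rfl
  -- self-adjointness of each E n
  have hstarE : ∀ n, S (E n) = E n := by
    intro n
    induction n with
    | zero =>
      funext k
      show ((-1:ℂ)^k) • star' (e0 k) = e0 k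
      by_cases hk : k = 0 <;> simp [he0, hk, hps, hstar_zero]
    | succ n ih =>
      rw [hES, hSsub, hSnsmul, hSnsmul, hSpow _ ih, hSpow _ ih]
  -- order of the defect
  have hOrdR : ∀ n, Ord (n + 1) (E n * E n - E n) := by
    intro n
    induction n with
    | zero =>
      intro k hk
      interval_cases k
      show starCoeffMul Cb e0 e0 0 - e0 0 = 0
      simp [starCoeffMul, he0, hC0, hp]
    | succ n ih =>
      have key : E (n+1) * E (n+1) - E (n+1)
          = ((E n * E n - E n) * (E n * E n - E n)) * (4•(E n * E n - E n) - 3•(1 : FPS A)) := by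
        rw [hES]
        exact idem_key (E n)
      rw [key]
      have h1 : Ord ((n+1) + (n+1)) ((E n * E n - E n) * (E n * E n - E n)) := hOmul ih ih
      have h2 : Ord (((n+1)+(n+1)) + 0) (((E n * E n - E n) * (E n * E n - E n))
          * (4•(E n * E n - E n) - 3•(1 : FPS A))) :=
        hOmul h1 (fun k hk => absurd hk (Nat.not_lt_zero k))
      exact hOmono (show n+1+1 ≤ (n+1)+(n+1)+0 by omega) h2
  -- successive differences are small
  have hdiff : ∀ n, Ord (n + 1) (E (n+1) - E n) := by
    intro n
    have key : E (n+1) - E n = (E n * E n - E n) * (1 - 2•(E n)) := by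
      rw [hES]; exact diff_key (E n)
    rw [key]
    have h2 : Ord ((n+1) + 0) ((E n * E n - E n) * (1 - 2•(E n))) :=
      hOmul (hOrdR n) (fun k hk => absurd hk (Nat.not_lt_zero k))
    simpa using h2
  -- stabilization
  have hstab : ∀ k m, E (k + 1 + m) k = E (k+1) k := by
    intro k m
    induction m with
    | zero => rfl
    | succ m ih =>
      have h := hdiff (k + 1 + m) k (by omega)
      have h' : E (k+1+m+1) k - E (k+1+m) k = 0 := h
      have : E (k + 1 + (m+1)) k = E (k+1+m) k := by
        have := sub_eq_zero.mp h'
        simpa [show k+1+(m+1) = k+1+m+1 by omega] using this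
      rw [this, ih]
  set p : FPS A := fun k => E (k+1) k with hpdef
  have hagree : ∀ n k, k < n → E n k = p k := by
    intro n k hk
    have hn : n = k + 1 + (n - k - 1) := by omega
    rw [hn, hstab]
  -- coefficient k of a product depends only on coefficients ≤ k
  have hMext : ∀ (u u' v v' : ℕ → A) (k : ℕ), (∀ i ≤ k, u i = u' i) → (∀ i ≤ k, v i = v' i) →
      starCoeffMul Cb u v k = starCoeffMul Cb u' v' k := by
    intro u u' v v' k hu hv
    unfold starCoeffMul
    refine Finset.sum_congr rfl fun l hl => Finset.sum_congr rfl fun i hi => ?_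
    simp only [Finset.mem_range] at hl hi
    rw [hu i (by omega), hv (k - l - i) (by omega)]
  refine ⟨p, ?_, ?_, ?_⟩
  · -- idempotent
    funext k
    have h1 : starCoeffMul Cb p p k = starCoeffMul Cb (E (k+1)) (E (k+1)) k :=
      hMext _ _ _ _ k (fun i hi => (hagree (k+1) i (by omega)).symm)
        (fun i hi => (hagree (k+1) i (by omega)).symm)
    have h2 : (E (k+1) * E (k+1) - E (k+1)) k = 0 := hOrdR (k+1) k (by omega)
    have h3 : starCoeffMul Cb (E (k+1)) (E (k+1)) k - E (k+1) k = 0 := h2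
    have h4 : starCoeffMul Cb (E (k+1)) (E (k+1)) k = E (k+1) k := sub_eq_zero.mp h3
    rw [h1, h4]
  · -- self-adjoint
    funext k
    show ((-1:ℂ)^k) • star' (p k) = p k
    have : p k = E (k+1) k := rfl
    rw [this]
    exact congrFun (hstarE (k+1)) k
  · -- zeroth coefficient
    have h' : E 1 0 - E 0 0 = 0 := hdiff 0 0 (by omega)
    have h2 : E 1 0 = E 0 0 := sub_eq_zero.mp h'
    show E 1 0 = p₀
    rw [h2]
    show (if (0:ℕ) = 0 then p₀ else 0) = p₀
    simp
end

section
/- Let A and ⋆ be as in the context. Then for every u₀ ∈ A with u₀² = 1 and u₀* = u₀, there exists an element u_ℏ = Σ_{j≥0} u_j ℏ^j ∈ A[[ℏ]] such that u_ℏ ⋆ u_ℏ = 1, u_ℏ* = u_ℏ, and u_0 = u₀ (i.e. u_ℏ ≡ u₀ mod ℏ). -/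
section Helpers
variable {A : Type*} [Ring A] (Cb : ℕ → A → A → A)

lemma scm_congr (u u' v v' : ℕ → A) (k : ℕ)
    (hu : ∀ j ≤ k, u j = u' j) (hv : ∀ j ≤ k, v j = v' j) :
    starCoeffMul Cb u v k = starCoeffMul Cb u' v' k := by
  unfold starCoeffMul
  refine Finset.sum_congr rfl fun l hl => Finset.sum_congr rfl fun i hi => ?_
  rw [Finset.mem_range] at hl hi
  rw [hu i (by omega), hv (k - l - i) (by omega)]

lemma scm_zero (u v : ℕ → A) : starCoeffMul Cb u v 0 = Cb 0 (u 0) (v 0) := by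
  simp [starCoeffMul]

lemma scm_add_left (hCadd₁ : ∀ l (a a' b : A), Cb l (a + a') b = Cb l a b + Cb l a' b)
    (u u' v : ℕ → A) (k : ℕ) :
    starCoeffMul Cb (fun j => u j + u' j) v k
      = starCoeffMul Cb u v k + starCoeffMul Cb u' v k := by
  simp [starCoeffMul, hCadd₁, Finset.sum_add_distrib]

lemma scm_add_right (hCadd₂ : ∀ l (a b b' : A), Cb l a (b + b') = Cb l a b + Cb l a b')
    (u v v' : ℕ → A) (k : ℕ) :
    starCoeffMul Cb u (fun j => v j + v' j) k
      = starCoeffMul Cb u v k + starCoeffMul Cb u v' k := by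
  simp [starCoeffMul, hCadd₂, Finset.sum_add_distrib]

lemma scm_single_left (hC0 : ∀ a b : A, Cb 0 a b = a * b)
    (hCz : ∀ l (b : A), Cb l 0 b = 0) (a : A) (w : ℕ → A) (M : ℕ) :
    starCoeffMul Cb (fun j => if j = M then a else 0) w M = a * w 0 := by
  unfold starCoeffMul
  rw [Finset.sum_eq_single 0]
  · rw [Finset.sum_eq_single M]
    · simp [hC0]
    · intro i hi hiM
      simp [hiM, hCz]
    · intro h; exact absurd (Finset.self_mem_range_succ M) (by simpa using h)
  · intro l hl hl0
    rw [Finset.mem_range] at hl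
    apply Finset.sum_eq_zero
    intro i hi
    rw [Finset.mem_range] at hi
    have : i ≠ M := by omega
    simp [this, hCz]
  · intro h; exact absurd (Finset.mem_range.mpr (by omega)) h

lemma scm_single_right (hC0 : ∀ a b : A, Cb 0 a b = a * b)
    (hCz : ∀ l (b : A), Cb l b 0 = 0) (a : A) (w : ℕ → A) (M : ℕ) :
    starCoeffMul Cb w (fun j => if j = M then a else 0) M = w 0 * a := by
  unfold starCoeffMul
  rw [Finset.sum_eq_single 0]
  · rw [Finset.sum_eq_single 0]
    · simp [hC0]
    · intro i hi hi0
      rw [Finset.mem_range] at hi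
      have : M - i ≠ M := by omega
      simp [this, hCz]
    · intro h; exact absurd (Finset.mem_range.mpr (by omega)) h
  · intro l hl hl0
    rw [Finset.mem_range] at hl
    apply Finset.sum_eq_zero
    intro i hi
    rw [Finset.mem_range] at hi
    have : M - l - i ≠ M := by omega
    simp [this, hCz]
  · intro h; exact absurd (Finset.mem_range.mpr (by omega)) h

end Helpers

noncomputable def uSeq {A : Type*} [Ring A] [Algebra ℂ A]
    (Cb : ℕ → A → A → A) (u₀ : A) : ℕ → A
  | M =>
    if M = 0 then u₀ else
      (-(1/2 : ℂ)) • (u₀ * starCoeffMul Cb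
        (fun j => if h : j < M then uSeq Cb u₀ j else 0)
        (fun j => if h : j < M then uSeq Cb u₀ j else 0) M)
  decreasing_by all_goals omega

/-- lifting of self-adjoint unitaries to a formal star product (core inductive
construction of Lemma 3.3): if `u₀ ∈ A` satisfies `u₀² = 1` and `u₀* = u₀`, then there is
`u_ℏ = Σ_j u_j ℏ^j ∈ A[[ℏ]]` with `u_ℏ ⋆ u_ℏ = 1`, `u_ℏ* = u_ℏ` and `u_0 = u₀`. -/
theorem star_product_selfadjoint_unitary_lift
    {A : Type*} [Ring A] [Algebra ℂ A] (star' : A → A)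
    (hstar_add : ∀ a b : A, star' (a + b) = star' a + star' b)
    (hstar_mul : ∀ a b : A, star' (a * b) = star' b * star' a)
    (hstar_one : star' 1 = 1)
    (hstar_invol : ∀ a : A, star' (star' a) = a)
    (hstar_smul : ∀ (z : ℂ) (a : A), star' (z • a) = (starRingEnd ℂ z) • star' a)
    (Cb : ℕ → A → A → A)
    (hC0 : ∀ a b : A, Cb 0 a b = a * b)
    (hCadd₁ : ∀ l (a a' b : A), Cb l (a + a') b = Cb l a b + Cb l a' b)
    (hCadd₂ : ∀ l (a b b' : A), Cb l a (b + b') = Cb l a b + Cb l a b')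
    (hCsmul₁ : ∀ l (z : ℂ) (a b : A), Cb l (z • a) b = z • Cb l a b)
    (hCsmul₂ : ∀ l (z : ℂ) (a b : A), Cb l a (z • b) = z • Cb l a b)
    (hassoc : ∀ u v w : ℕ → A,
      starCoeffMul Cb (starCoeffMul Cb u v) w = starCoeffMul Cb u (starCoeffMul Cb v w))
    (hone : ∀ u : ℕ → A, starCoeffMul Cb u fpsOne = u ∧ starCoeffMul Cb fpsOne u = u)
    (hstar_mul' : ∀ u v : ℕ → A,
      fpsStar star' (starCoeffMul Cb u v)
        = starCoeffMul Cb (fpsStar star' v) (fpsStar star' u))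
    (u₀ : A) (hu : u₀ * u₀ = 1) (hus : star' u₀ = u₀) :
    ∃ u : ℕ → A, starCoeffMul Cb u u = fpsOne ∧ fpsStar star' u = u ∧ u 0 = u₀ := by
  classical
  have hCz₁ : ∀ l (b : A), Cb l 0 b = 0 := by
    intro l b
    have := hCsmul₁ l 0 0 b
    simpa using this
  have hCz₂ : ∀ l (b : A), Cb l b 0 = 0 := by
    intro l b
    have := hCsmul₂ l 0 b 0
    simpa using this
  have hstar_zero : star' 0 = 0 := by
    have := hstar_smul 0 1
    simpa using this
  set u : ℕ → A := uSeq Cb u₀ with hudef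
  have hu0 : u 0 = u₀ := by rw [hudef, uSeq]; simp
  have key : ∀ M : ℕ, ((-1 : ℂ) ^ M • star' (u M) = u M)
      ∧ starCoeffMul Cb u u M = fpsOne M := by
    intro M
    induction M using Nat.strong_induction_on with
    | _ M IH =>
      rcases Nat.eq_zero_or_pos M with h0 | hpos
      · subst h0
        refine ⟨by simpa [hu0] using congrArg (fun a => (1 : ℂ) • a) hus, ?_⟩
        rw [scm_zero, hC0, hu0, hu]
        simp [fpsOne]
      · have hM0 : M ≠ 0 := by omega
        set T : ℕ → A := fun j => if h : j < M then u j else 0 with hT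
        have hTu : ∀ j, j < M → T j = u j := fun j hj => dif_pos hj
        have hTM : T M = 0 := dif_neg (by omega)
        have hT0 : T 0 = u₀ := by rw [hTu 0 hpos, hu0]
        set v : A := starCoeffMul Cb T T M with hv
        have huM : u M = (-(1/2 : ℂ)) • (u₀ * v) := by
          rw [hudef]
          show uSeq Cb u₀ M = _
          rw [uSeq]
          simp only [if_neg hM0]
          rfl
        -- low coefficients of T ⋆ T agree with fpsOne
        have hlow : ∀ k, k < M → starCoeffMul Cb T T k = fpsOne k := by
          intro k hk
          rw [scm_congr Cb T u T u k (fun j hj => hTu j (by omega))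
            (fun j hj => hTu j (by omega))]
          exact (IH k hk).2
        -- coefficients ≤ M of T ⋆ T agree with fpsOne + δ_M v
        have hTTg : ∀ j ≤ M, starCoeffMul Cb T T j
            = fpsOne j + (if j = M then v else 0) := by
          intro j hj
          rcases eq_or_lt_of_le hj with rfl | hjM
          · simp [fpsOne, hM0]; rfl
          · rw [hlow j hjM]
            simp [Nat.ne_of_lt hjM]
        -- commutation u₀ v = v u₀ from associativity
        have hcomm : u₀ * v = v * u₀ := by
          have h := congrFun (hassoc T T T) M
          have hl : starCoeffMul Cb (starCoeffMul Cb T T) T M = v * u₀ := by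
            rw [scm_congr Cb (starCoeffMul Cb T T)
                (fun j => fpsOne j + (if j = M then v else 0)) T T M hTTg
                (fun j _ => rfl),
              scm_add_left Cb hCadd₁, scm_single_left Cb hC0 hCz₁]
            have := congrFun (hone T).2 M
            rw [show starCoeffMul Cb (fun j => fpsOne j) T M
                  = starCoeffMul Cb fpsOne T M from rfl, this, hTM, hT0]
            simp
          have hr : starCoeffMul Cb T (starCoeffMul Cb T T) M = u₀ * v := by
            rw [scm_congr Cb T T (starCoeffMul Cb T T)
                (fun j => fpsOne j + (if j = M then v else 0)) M
                (fun j _ => rfl) hTTg,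
              scm_add_right Cb hCadd₂, scm_single_right Cb hC0 hCz₂]
            have := congrFun (hone T).1 M
            rw [show starCoeffMul Cb T (fun j => fpsOne j) M
                  = starCoeffMul Cb T fpsOne M from rfl, this, hTM, hT0]
            simp
          rw [hl, hr] at h
          exact h.symm
        -- self-adjointness of v
        have hTstar : fpsStar star' T = T := by
          funext j
          by_cases hj : j < M
          · show ((-1 : ℂ) ^ j) • star' (T j) = T j
            rw [hTu j hj]
            exact (IH j hj).1
          · show ((-1 : ℂ) ^ j) • star' (T j) = T j
            have hz : T j = 0 := dif_neg hj
            rw [hz, hstar_zero, smul_zero]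
        have hvstar : ((-1 : ℂ) ^ M) • star' v = v := by
          have h := congrFun (hstar_mul' T T) M
          rw [hTstar] at h
          exact h
        have hvstar' : star' v = ((-1 : ℂ) ^ M) • v := by
          calc star' v = ((-1 : ℂ) ^ M) • (((-1 : ℂ) ^ M) • star' v) := by
                rw [smul_smul, ← mul_pow]; norm_num
            _ = ((-1 : ℂ) ^ M) • v := by rw [hvstar]
        constructor
        · -- self-adjointness of u M
          rw [huM, hstar_smul, hstar_mul, hvstar', hus, smul_mul_assoc, smul_smul, smul_smul]
          rw [hcomm]
          congr 1
          have hconj : (starRingEnd ℂ) (-(1/2 : ℂ)) = -(1/2 : ℂ) := by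
            rw [map_neg, map_div₀, map_one, Complex.conj_ofNat]
          rw [hconj, mul_comm ((-1 : ℂ) ^ M) (-(1/2 : ℂ)), mul_assoc, ← mul_pow]
          norm_num
        · -- product coefficient at M vanishes
          have hug : ∀ j ≤ M, u j = T j + (if j = M then u M else 0) := by
            intro j hj
            rcases eq_or_lt_of_le hj with rfl | hjM
            · rw [hTM]; simp
            · rw [hTu j hjM]; simp [Nat.ne_of_lt hjM]
          rw [scm_congr Cb u (fun j => T j + (if j = M then u M else 0))
              u (fun j => T j + (if j = M then u M else 0)) M hug hug,
            scm_add_left Cb hCadd₁, scm_add_right Cb hCadd₂, scm_add_right Cb hCadd₂,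
            scm_single_left Cb hC0 hCz₁, scm_single_right Cb hC0 hCz₂,
            scm_single_right Cb hC0 hCz₂]
          rw [show (if (0 : ℕ) = M then u M else 0) = 0 from if_neg (by omega)]
          rw [hT0, ← hv, huM]
          rw [mul_smul_comm, smul_mul_assoc]
          simp only [zero_mul, mul_zero, smul_zero, add_zero, zero_add]
          rw [show u₀ * (u₀ * v) = v by rw [← mul_assoc, hu, one_mul]]
          rw [show u₀ * v * u₀ = v by rw [hcomm, mul_assoc, hu, mul_one]]
          rw [show (fpsOne M : A) = 0 from if_neg hM0]
          module
  refine ⟨u, funext fun k => (key k).2, funext fun j => (key j).1, hu0⟩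
end

section
/- Let A be a unital ℂ-algebra with a ℂ-antilinear involution *, containing elements c_1,…,c_n and Γ with c_i c_j + c_j c_i = −2δ_{ij}·1, c_i* = −c_i, Γ* = Γ, Γ² = 1 and Γ c_i + c_i Γ = 0, and elements U_1,…,U_n with U_i U_i* = U_i* U_i = 1, such that the elements U_1,…,U_n, U_1*,…,U_n* pairwise commute and each of them commutes with every c_j and with Γ. Then for all real numbers r and m, ( Σ_{i=1}^n c_i · (U_i* − U_i)/2 + r·Γ·( Σ_{i=1}^n (U_i* + U_i − 2)/2 + m·1 ) )² = −Σ_{i=1}^n ((U_i* − U_i)/2)² + r²·( Σ_{i=1}^n (U_i* + U_i − 2)/2 + m·1 )². -/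
/-- the operator-level squaring identity of the Wilson–Dirac operator:
with Clifford generators `c₁,…,cₙ`, grading `Γ`, commuting unitary shifts `U₁,…,Uₙ`, and
real parameters `r`, `m`,
`(Σᵢ cᵢ(Uᵢ* − Uᵢ)/2 + rΓ(Σᵢ(Uᵢ* + Uᵢ − 2)/2 + m·1))²
  = −Σᵢ((Uᵢ* − Uᵢ)/2)² + r²(Σᵢ(Uᵢ* + Uᵢ − 2)/2 + m·1)²`. -/
theorem wilson_dirac_operator_square
    {A : Type*} [Ring A] [Algebra ℝ A] [StarRing A] (n : ℕ)
    (c : Fin n → A) (Γ : A) (U : Fin n → A)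
    (hcc : ∀ i j, c i * c j + c j * c i = if i = j then (-2 : A) else 0)
    (hcstar : ∀ i, star (c i) = -(c i))
    (hΓstar : star Γ = Γ)
    (hΓ2 : Γ * Γ = 1)
    (hΓc : ∀ i, Γ * c i + c i * Γ = 0)
    (hUunit : ∀ i, U i * star (U i) = 1 ∧ star (U i) * U i = 1)
    (hUU : ∀ i j, Commute (U i) (U j))
    (hUUs : ∀ i j, Commute (U i) (star (U j)))
    (hUsUs : ∀ i j, Commute (star (U i)) (star (U j)))
    (hUc : ∀ i j, Commute (U i) (c j))
    (hUsc : ∀ i j, Commute (star (U i)) (c j))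
    (hUΓ : ∀ i, Commute (U i) Γ)
    (hUsΓ : ∀ i, Commute (star (U i)) Γ)
    (r m : ℝ) :
    ((∑ i, (2 : ℝ)⁻¹ • (c i * (star (U i) - U i)))
        + r • (Γ * ((∑ i, (2 : ℝ)⁻¹ • (star (U i) + U i - 2)) + m • (1 : A)))) ^ 2
      = -(∑ i, ((2 : ℝ)⁻¹ • (star (U i) - U i)) ^ 2)
        + (r ^ 2) • ((∑ i, (2 : ℝ)⁻¹ • (star (U i) + U i - 2)) + m • (1 : A)) ^ 2 := by
  set a : Fin n → A := fun i => (2 : ℝ)⁻¹ • (star (U i) - U i) with ha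
  set w : A := (∑ i, (2 : ℝ)⁻¹ • (star (U i) + U i - 2)) + m • (1 : A) with hw
  -- basic commutation facts
  have hac : ∀ i j, Commute (a i) (c j) := fun i j =>
    Commute.smul_left ((hUsc i j).sub_left (hUc i j)) _
  have haa : ∀ i j, Commute (a i) (a j) := fun i j =>
    Commute.smul_left (Commute.smul_right
      (((hUsUs i j).sub_right (hUUs j i).symm).sub_left ((hUUs i j).sub_right (hUU i j))) _) _
  have haΓ : ∀ i, Commute (a i) Γ := fun i =>
    Commute.smul_left ((hUsΓ i).sub_left (hUΓ i)) _
  have hwx : ∀ x : A, (∀ i, Commute (U i) x) → (∀ i, Commute (star (U i)) x) →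
      Commute w x := by
    intro x h1 h2
    refine Commute.add_left (Commute.sum_left _ _ _ fun i _ => Commute.smul_left ?_ _)
      (Commute.smul_left (Commute.one_left _) _)
    refine ((h2 i).add_left (h1 i)).sub_left ?_
    rw [← one_add_one_eq_two]
    exact (Commute.one_left x).add_left (Commute.one_left x)
  have hwΓ : Commute w Γ := hwx Γ hUΓ hUsΓ
  have hwc : ∀ j, Commute w (c j) := fun j => hwx (c j) (fun i => hUc i j) (fun i => hUsc i j)
  have hwa : ∀ j, Commute w (a j) := fun j =>
    Commute.smul_right ((hwx (star (U j)) (fun i => (hUUs i j)) (fun i => hUsUs i j)).sub_right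
      (hwx (U j) (fun i => hUU i j) (fun i => (hUUs j i).symm))) _
  set D : A := ∑ i, c i * a i with hD
  have hsum : (∑ i, (2 : ℝ)⁻¹ • (c i * (star (U i) - U i))) = D := by
    rw [hD]
    refine Finset.sum_congr rfl fun i _ => ?_
    simp only [ha, mul_smul_comm]
  -- D squared
  have hsym : ∀ i j : Fin n, (c i * a i) * (c j * a j) + (c j * a j) * (c i * a i)
      = if i = j then (2 : ℝ) • (-(a i * a j)) else 0 := by
    intro i j
    have h1 : (c i * a i) * (c j * a j) = (c i * c j) * (a i * a j) :=
      Commute.mul_mul_mul_comm (hac i j) _ _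
    have h2 : (c j * a j) * (c i * a i) = (c j * c i) * (a i * a j) := by
      rw [Commute.mul_mul_mul_comm (hac j i) _ _, (haa j i).eq]
    rw [h1, h2, ← add_mul, hcc i j]
    by_cases h : i = j
    · subst h
      simp only [if_true]
      rw [smul_neg, neg_mul, neg_inj, two_smul ℝ (a i * a i), two_mul]
    · simp [h]
  have hDD : D * D = -(∑ i, a i * a i) := by
    have expand : D * D = ∑ i, ∑ j, (c i * a i) * (c j * a j) := by
      rw [hD, Finset.sum_mul_sum]
    have expand' : D * D = ∑ i, ∑ j, (c j * a j) * (c i * a i) := by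
      rw [expand]; exact Finset.sum_comm
    have htwo : (2 : ℝ) • (D * D) = (2 : ℝ) • (-(∑ i, a i * a i)) := by
      rw [two_smul ℝ (D * D)]
      calc D * D + D * D
          = (∑ i, ∑ j, (c i * a i) * (c j * a j))
            + ∑ i, ∑ j, (c j * a j) * (c i * a i) := by
            exact congrArg₂ (· + ·) expand expand'
        _ = ∑ i, ∑ j, ((c i * a i) * (c j * a j) + (c j * a j) * (c i * a i)) := by
            rw [← Finset.sum_add_distrib]
            exact Finset.sum_congr rfl fun i _ => (Finset.sum_add_distrib).symm
        _ = ∑ i, ∑ j, (if i = j then (2 : ℝ) • (-(a i * a j)) else 0) := by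
            exact Finset.sum_congr rfl fun i _ => Finset.sum_congr rfl fun j _ => hsym i j
        _ = ∑ i : Fin n, (2 : ℝ) • (-(a i * a i)) := by
            refine Finset.sum_congr rfl fun i _ => ?_
            simp
        _ = (2 : ℝ) • (-(∑ i, a i * a i)) := by
            rw [← Finset.smul_sum, ← Finset.sum_neg_distrib]
    calc D * D = (2 : ℝ)⁻¹ • ((2 : ℝ) • (D * D)) := (inv_smul_smul₀ two_ne_zero _).symm
      _ = (2 : ℝ)⁻¹ • ((2 : ℝ) • (-(∑ i, a i * a i))) := by rw [htwo]
      _ = -(∑ i, a i * a i) := inv_smul_smul₀ two_ne_zero _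
  -- Γ anticommutes with D
  have hΓD : Γ * D = -(D * Γ) := by
    rw [hD, Finset.mul_sum, Finset.sum_mul, ← Finset.sum_neg_distrib]
    refine Finset.sum_congr rfl fun i _ => ?_
    have h' : Γ * c i = -(c i * Γ) := eq_neg_of_add_eq_zero_left (hΓc i)
    calc Γ * (c i * a i) = (Γ * c i) * a i := by rw [mul_assoc]
      _ = -((c i * Γ) * a i) := by rw [h', neg_mul]
      _ = -(c i * (a i * Γ)) := by rw [mul_assoc, (haΓ i).eq]
      _ = -(c i * a i * Γ) := by rw [mul_assoc]
  have hwD : Commute w D := Commute.sum_right _ _ _ fun i _ => (hwc i).mul_right (hwa i)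
  -- cross terms cancel
  have cross : D * (r • (Γ * w)) + (r • (Γ * w)) * D = 0 := by
    have h0 : D * (Γ * w) + Γ * w * D = 0 := by
      have h3 : Γ * w * D = Γ * D * w := by rw [mul_assoc, hwD.eq, ← mul_assoc]
      rw [h3, hΓD]
      noncomm_ring
    rw [mul_smul_comm, smul_mul_assoc, ← smul_add, h0, smul_zero]
  -- assembly
  rw [hsum]
  set B := r • (Γ * w) with hB
  have hB2 : B * B = (r ^ 2) • (w ^ 2) := by
    rw [hB, smul_mul_smul_comm, ← pow_two, sq w]
    congr 1
    calc Γ * w * (Γ * w) = Γ * (w * Γ) * w := by noncomm_ring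
      _ = Γ * (Γ * w) * w := by rw [hwΓ.eq]
      _ = (Γ * Γ) * (w * w) := by noncomm_ring
      _ = w * w := by rw [hΓ2, one_mul]
  have hsumsq : (∑ i, ((2 : ℝ)⁻¹ • (star (U i) - U i)) ^ 2) = ∑ i, a i * a i := by
    refine Finset.sum_congr rfl fun i _ => ?_
    rw [sq]
  rw [show (D + B) ^ 2 = (D + B) * (D + B) from sq (D + B), hsumsq]
  rw [add_mul, mul_add D, mul_add B, hDD, hB2]
  set S := ∑ i, a i * a i
  calc (-S + D * B) + (B * D + (r ^ 2) • (w ^ 2))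
      = -S + ((D * B + B * D) + (r ^ 2) • (w ^ 2)) := by abel
    _ = -S + (r ^ 2) • (w ^ 2) := by rw [cross, zero_add]
end

section
/- Fix an integer n ≥ 1, matrices c_1,…,c_n, Γ ∈ M_d(ℂ) with c_i c_j + c_j c_i = −2δ_{ij}·I, Γ² = I and Γc_i + c_iΓ = 0, a real number r > 0 and a real number m ∉ {0, 2, 4, …, 2n}. Let κ : ℝ^n → [0,1] be any function such that κ(θ) = 1 whenever sin θ_i = 0 for all i = 1,…,n. Then for every t ∈ [0,1] and every θ ∈ ℝ^n, the matrix (1 − t·(1−κ(θ)))·f_DW(m,r)(θ) − t·(1−κ(θ))·Γ is invertible in M_d(ℂ), where f_DW(m,r)(θ) := Σ_{i=1}^n ( −√−1 · c_i · sin θ_i + r·Γ·(cos θ_i − 1) ) + r·m·Γ. -/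
/-- The symbol of the Wilson–Dirac operator,
`f_DW(m,r)(θ) = Σᵢ ( -√-1·cᵢ·sin θᵢ + r·Γ·(cos θᵢ − 1) ) + r·m·Γ ∈ M_d(ℂ)`. -/
noncomputable def fDWmat {d : ℕ} {n : ℕ}
    (c : Fin n → Matrix (Fin d) (Fin d) ℂ) (Γ : Matrix (Fin d) (Fin d) ℂ)
    (m r : ℝ) (θ : Fin n → ℝ) : Matrix (Fin d) (Fin d) ℂ :=
  (∑ i, ((-Complex.I * (Real.sin (θ i) : ℂ)) • c i
      + ((r : ℂ) * ((Real.cos (θ i) : ℂ) - 1)) • Γ))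
    + ((r : ℂ) * (m : ℂ)) • Γ

open Finset

lemma clifford_sq {d n : ℕ} (c : Fin n → Matrix (Fin d) (Fin d) ℂ)
    (Γ : Matrix (Fin d) (Fin d) ℂ)
    (hcc : ∀ i j, c i * c j + c j * c i = if i = j then (-2 : ℂ) • (1 : Matrix (Fin d) (Fin d) ℂ) else 0)
    (hΓ2 : Γ * Γ = 1)
    (hΓc : ∀ i, Γ * c i + c i * Γ = 0)
    (x : Fin n → ℂ) (y : ℂ) :
    ((∑ i, x i • c i) + y • Γ) * ((∑ i, x i • c i) + y • Γ)
      = (-(∑ i, x i ^ 2) + y ^ 2) • 1 := by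
  set A := ∑ i, x i • c i with hA
  have hAA : A * A = (-(∑ i, x i ^ 2)) • 1 := by
    have h1 : A * A = ∑ i, ∑ j, (x i * x j) • (c i * c j) := by
      rw [hA, Finset.sum_mul]
      refine Finset.sum_congr rfl fun i _ => ?_
      rw [Finset.mul_sum]
      refine Finset.sum_congr rfl fun j _ => ?_
      rw [smul_mul_assoc, mul_smul_comm, smul_smul]
    have h2 : A * A = ∑ i, ∑ j, (x i * x j) • (c j * c i) := by
      rw [h1, Finset.sum_comm]
      exact Finset.sum_congr rfl fun i _ => Finset.sum_congr rfl fun j _ => by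
        rw [mul_comm (x j) (x i)]
    have h3 : (2 : ℂ) • (A * A) = ∑ i, ∑ j, (x i * x j) • (c i * c j + c j * c i) := by
      rw [two_smul]
      nth_rewrite 1 [h1]
      nth_rewrite 1 [h2]
      rw [← Finset.sum_add_distrib]
      refine Finset.sum_congr rfl fun i _ => ?_
      rw [← Finset.sum_add_distrib]
      exact Finset.sum_congr rfl fun j _ => by rw [← smul_add]
    have h4 : (2 : ℂ) • (A * A) = (2 : ℂ) • ((-(∑ i, x i ^ 2)) • 1) := by
      rw [h3]
      simp only [hcc, smul_ite, smul_zero, Finset.sum_ite_eq, Finset.mem_univ, if_true]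
      have key : ∀ i : Fin n, (x i * x i) • ((-2 : ℂ) • (1 : Matrix (Fin d) (Fin d) ℂ))
          = ((-2) * x i ^ 2) • 1 := fun i => by rw [smul_smul]; ring_nf
      rw [Finset.sum_congr rfl fun i _ => key i, ← Finset.sum_smul, smul_smul, ← Finset.mul_sum]
      congr 1
      ring
    exact smul_right_injective (Matrix (Fin d) (Fin d) ℂ) (two_ne_zero (α := ℂ)) h4
  have hAΓ : A * Γ + Γ * A = 0 := by
    rw [hA, Finset.sum_mul, Finset.mul_sum, ← Finset.sum_add_distrib]
    refine Finset.sum_eq_zero fun i _ => ?_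
    rw [smul_mul_assoc, mul_smul_comm, ← smul_add, add_comm, hΓc i, smul_zero]
  have expand : (A + y • Γ) * (A + y • Γ)
      = A * A + y • (A * Γ + Γ * A) + (y * y) • (Γ * Γ) := by
    rw [add_mul, mul_add, mul_add]
    simp only [smul_mul_assoc, mul_smul_comm, smul_smul, smul_add]
    abel
  rw [expand, hAΓ, smul_zero, add_zero, hΓ2, hAA, ← add_smul]
  ring_nf


/-- pointwise invertibility along the linear homotopy (4.5) of Proposition 4.4:
for any cutoff `κ : ℝⁿ → [0,1]` with `κ(θ) = 1` whenever all `sin θᵢ = 0`, every `t ∈ [0,1]`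
and every `θ ∈ ℝⁿ`, the matrix `(1 − t(1−κ(θ)))·f_DW(m,r)(θ) − t(1−κ(θ))·Γ` is invertible. -/
theorem wilson_dirac_homotopy_invertible
    (n d : ℕ) (hn : 1 ≤ n)
    (c : Fin n → Matrix (Fin d) (Fin d) ℂ) (Γ : Matrix (Fin d) (Fin d) ℂ)
    (hcc : ∀ i j, c i * c j + c j * c i = if i = j then (-2 : ℂ) • (1 : Matrix (Fin d) (Fin d) ℂ) else 0)
    (hΓ2 : Γ * Γ = 1)
    (hΓc : ∀ i, Γ * c i + c i * Γ = 0)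
    (r m : ℝ) (hr : 0 < r) (hm : ∀ l : ℕ, l ≤ n → m ≠ 2 * l)
    (κ : (Fin n → ℝ) → ℝ)
    (hκmem : ∀ θ, κ θ ∈ Set.Icc (0 : ℝ) 1)
    (hκ1 : ∀ θ : Fin n → ℝ, (∀ i, Real.sin (θ i) = 0) → κ θ = 1)
    (t : ℝ) (ht : t ∈ Set.Icc (0 : ℝ) 1) (θ : Fin n → ℝ) :
    IsUnit (((1 - t * (1 - κ θ) : ℝ) : ℂ) • fDWmat c Γ m r θ
        - ((t * (1 - κ θ) : ℝ) : ℂ) • Γ) := by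
  set a : ℝ := 1 - t * (1 - κ θ) with ha
  set b : ℝ := t * (1 - κ θ) with hb
  set S : ℝ := (∑ i, (Real.cos (θ i) - 1)) + m with hS
  clear_value a b S
  set x : Fin n → ℂ := fun i => -Complex.I * ((a * Real.sin (θ i) : ℝ) : ℂ) with hx
  set y : ℂ := ((a * (r * S) - b : ℝ) : ℂ) with hy
  set M : Matrix (Fin d) (Fin d) ℂ :=
    ((a : ℝ) : ℂ) • fDWmat c Γ m r θ - ((b : ℝ) : ℂ) • Γ with hM
  have hab : a + b = 1 := by rw [ha, hb]; ring
  -- rewrite M in Clifford form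
  have hMform : M = (∑ i, x i • c i) + y • Γ := by
    rw [hM, fDWmat, smul_add, Finset.smul_sum]
    have step : ∀ i : Fin n,
        ((a : ℂ)) • ((-Complex.I * (Real.sin (θ i) : ℂ)) • c i
          + ((r : ℂ) * ((Real.cos (θ i) : ℂ) - 1)) • Γ)
        = x i • c i + ((a : ℂ) * ((r : ℂ) * ((Real.cos (θ i) : ℂ) - 1))) • Γ := by
      intro i
      have hxi : (a : ℂ) * (-Complex.I * (Real.sin (θ i) : ℂ)) = x i := by
        rw [hx]; push_cast; ring
      rw [smul_add, smul_smul, smul_smul, hxi]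
    rw [Finset.sum_congr rfl fun i _ => step i, Finset.sum_add_distrib, ← Finset.sum_smul,
      smul_smul]
    have coeff : (∑ i, (a : ℂ) * ((r : ℂ) * ((Real.cos (θ i) : ℂ) - 1)))
        + (a : ℂ) * ((r : ℂ) * (m : ℂ)) - (b : ℂ) = y := by
      rw [hy, Complex.ofReal_sub, Complex.ofReal_mul, Complex.ofReal_mul, hS,
        Complex.ofReal_add, Complex.ofReal_sum, mul_add, mul_add, Finset.mul_sum,
        Finset.mul_sum]
      congr 2
      exact Finset.sum_congr rfl fun i _ => by push_cast; ring
    rw [← coeff, sub_smul, add_smul]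
    abel
  -- the square
  have hsq := clifford_sq c Γ hcc hΓ2 hΓc x y
  set lam : ℝ := (∑ i, (a * Real.sin (θ i)) ^ 2) + (a * (r * S) - b) ^ 2 with hlam
  have hxsq : ∀ i : Fin n, x i ^ 2 = -(((a * Real.sin (θ i)) ^ 2 : ℝ) : ℂ) := by
    intro i
    rw [hx]
    simp only []
    rw [Complex.ofReal_pow, mul_pow, neg_pow, Complex.I_sq]
    ring
  have hlamC : -(∑ i, x i ^ 2) + y ^ 2 = ((lam : ℝ) : ℂ) := by
    have h1 : -(∑ i, x i ^ 2) = (((∑ i, (a * Real.sin (θ i)) ^ 2 : ℝ)) : ℂ) := by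
      rw [Finset.sum_congr rfl fun i _ => hxsq i, Finset.sum_neg_distrib, neg_neg,
        Complex.ofReal_sum]
    rw [hlam, Complex.ofReal_add, ← h1, hy, Complex.ofReal_pow]
  have hMM : M * M = ((lam : ℝ) : ℂ) • 1 := by rw [hMform, hsq, hlamC]
  -- lam ≠ 0
  have hlamne : lam ≠ 0 := by
    intro h0
    have hsum_nonneg : (0:ℝ) ≤ ∑ i, (a * Real.sin (θ i)) ^ 2 :=
      Finset.sum_nonneg fun i _ => sq_nonneg _
    have hsq_nonneg : (0:ℝ) ≤ (a * (r * S) - b) ^ 2 := sq_nonneg _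
    have hl0 : (∑ i, (a * Real.sin (θ i)) ^ 2) + (a * (r * S) - b) ^ 2 = 0 := by
      rw [← hlam]; exact h0
    have hsum0 : ∑ i, (a * Real.sin (θ i)) ^ 2 = 0 := by linarith
    have hy0 : a * (r * S) - b = 0 := by
      have h2 : (a * (r * S) - b) ^ 2 = 0 := by linarith
      exact pow_eq_zero_iff (by norm_num) |>.mp h2
    by_cases hA : a = 0
    · have hb1 : b = 1 := by linarith [hab]
      rw [hA, hb1] at hy0; norm_num at hy0
    · have hsin : ∀ i, Real.sin (θ i) = 0 := by
        intro i
        have h3 := (Finset.sum_eq_zero_iff_of_nonneg fun i _ => sq_nonneg _).mp hsum0 i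
          (Finset.mem_univ i)
        have h4 := pow_eq_zero_iff (n := 2) (by norm_num) |>.mp h3
        rcases mul_eq_zero.mp h4 with h | h
        · exact absurd h hA
        · exact h
      have hκ := hκ1 θ hsin
      have hb0 : b = 0 := by rw [hb, hκ]; ring
      have ha1 : a = 1 := by linarith [hab]
      rw [ha1, hb0, one_mul, sub_zero] at hy0
      have hS0 : S = 0 := by
        rcases mul_eq_zero.mp hy0 with h | h
        · exact absurd h (ne_of_gt hr)
        · exact h
      have hcos : ∀ i, Real.cos (θ i) = 1 ∨ Real.cos (θ i) = -1 := by
        intro i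
        exact mul_self_eq_one_iff.mp (by nlinarith [Real.sin_sq_add_cos_sq (θ i), hsin i])
      set F := Finset.univ.filter (fun i => Real.cos (θ i) = -1) with hF
      have hsumcos : (∑ i, (Real.cos (θ i) - 1)) = -2 * F.card := by
        rw [← Finset.sum_filter_add_sum_filter_not Finset.univ (fun i => Real.cos (θ i) = -1)]
        have h1 : ∑ i ∈ F, (Real.cos (θ i) - 1) = ∑ i ∈ F, (-2 : ℝ) := by
          refine Finset.sum_congr rfl fun i hi => ?_
          rw [hF] at hi
          rw [(Finset.mem_filter.mp hi).2]; norm_num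
        have h2 : ∑ i ∈ Finset.univ.filter (fun i => ¬ Real.cos (θ i) = -1), (Real.cos (θ i) - 1)
            = 0 := by
          refine Finset.sum_eq_zero fun i hi => ?_
          have hne := (Finset.mem_filter.mp hi).2
          rcases hcos i with h | h
          · rw [h]; ring
          · exact absurd h hne
        rw [← hF, h1, h2, Finset.sum_const, add_zero]
        simp [mul_comm]
      have hcard : F.card ≤ n := by
        calc F.card ≤ Finset.univ.card := Finset.card_filter_le _ _
        _ = n := by simp
      have hmm : m = 2 * F.card := by
        have h5 : S = -2 * F.card + m := by rw [hS, hsumcos]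
        rw [hS0] at h5
        linarith
      exact hm F.card hcard hmm
  have hlamCne : ((lam : ℝ) : ℂ) ≠ 0 := Complex.ofReal_ne_zero.mpr hlamne
  rw [isUnit_iff_exists]
  refine ⟨(((lam : ℝ) : ℂ))⁻¹ • M, ?_, ?_⟩
  · rw [mul_smul_comm, hMM, smul_smul, inv_mul_cancel₀ hlamCne, one_smul]
  · rw [smul_mul_assoc, hMM, smul_smul, inv_mul_cancel₀ hlamCne, one_smul]
end
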